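/- arXiv:2206.02992 — 3 statements merged into one kernel-verified Lean document; each statement's English description precedes it below -/
import Mathlib

section
/- If the invariance □φ holds for a subsystem S' = (Init', Trans'), then the lifted invariance □(φ↑S) holds for the parent system S, where S's transition relation is defined by existentially quantifying the input/output of S' (i.e., Trans(s,s',i,o) ↔ ∃ i' o', Trans'(s,s',i',o') ∧ C(i,o,i',o') for some connection relation C, Init = Init', and (φ↑S)(s,i) is defined as ∀ i' o', connection and Trans' consistency imply φ(s,i')). Formally: every counterexample of □(φ↑S) in S yields a counterexample of □φ in S', hence validity of the local invariance implies validity of the lifted one. -/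
/-- An execution path of length `k`: `s 0` is the initial state `s₋₁`,
and step `j` (for `j < k`) relates `s j` to `s (j+1)` via input `i j` and output `o j`. -/
def IsExec {St I O : Type} (Init : St → Prop) (Trans : St → St → I → O → Prop)
    (k : ℕ) (s : ℕ → St) (i : ℕ → I) (o : ℕ → O) : Prop :=
  Init (s 0) ∧ ∀ j < k, Trans (s j) (s (j+1)) (i j) (o j)

/-- The invariance `□φ` holds: no execution path violates `φ` at any step. -/
def InvHolds {St I O : Type} (Init : St → Prop) (Trans : St → St → I → O → Prop)
    (φ : St → I → Prop) : Prop :=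
  ∀ k (s : ℕ → St) (i : ℕ → I) (o : ℕ → O),
    IsExec Init Trans k s i o → ∀ j < k, φ (s j) (i j)

/-- Locality of invariance checking: if `□φ` holds for the subsystem `S' = (Init, Trans')`,
then the lifted invariance `□(φ↑S)` holds for the parent system `S = (Init, TransS)`,
where `TransS s s' i o ↔ ∃ i' o', Trans' s s' i' o' ∧ C i o i' o'` and
`(φ↑S) s i := ∀ i' o' o s', C i o i' o' → Trans' s s' i' o' → φ s i'`. -/
theorem local_invariance_lifts {St I O I' O' : Type}
    (Init : St → Prop) (Trans' : St → St → I' → O' → Prop)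
    (C : I → O → I' → O' → Prop) (φ : St → I' → Prop)
    (TransS : St → St → I → O → Prop)
    (hTransS : ∀ s s' i o, TransS s s' i o ↔ ∃ i' o', Trans' s s' i' o' ∧ C i o i' o')
    (lift : St → I → Prop)
    (hlift : ∀ s i, lift s i ↔ ∀ i' o' o s', C i o i' o' → Trans' s s' i' o' → φ s i')
    (hlocal : InvHolds Init Trans' φ) :
    InvHolds Init TransS lift := by
  intro k s i o hexec j hjk
  rw [hlift]
  intro i' o' o₂ s₂ hC hT
  -- extract witnesses for the subsystem transitions on steps < j
  have hw : ∀ n, n < j → ∃ i'n o'n, Trans' (s n) (s (n+1)) i'n o'n := by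
    intro n hn
    obtain ⟨a, b, hab, _⟩ := (hTransS _ _ _ _).mp (hexec.2 n (hn.trans hjk))
    exact ⟨a, b, hab⟩
  classical
  -- build sequences for the subsystem
  let ss : ℕ → St := fun n => if n ≤ j then s n else s₂
  let ii : ℕ → I' := fun n => if h : n < j then (hw n h).choose else i'
  let oo : ℕ → O' := fun n => if h : n < j then (hw n h).choose_spec.choose else o'
  have hexec' : IsExec Init Trans' (j+1) ss ii oo := by
    constructor
    · simpa [ss] using hexec.1
    · intro n hn
      by_cases h : n < j
      · have := (hw n h).choose_spec.choose_spec
        simpa [ss, ii, oo, h, Nat.le_of_lt h, Nat.succ_le_of_lt h] using this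
      · have hnj : n = j := by omega
        subst hnj
        simpa [ss, ii, oo] using hT
  have := hlocal (j+1) ss ii oo hexec' j (Nat.lt_succ_self j)
  simpa [ss, ii, oo] using this
end

section
/- Soundness of k-induction: let (Init, Trans) be a transition system, φ a predicate on states and inputs, and k ≥ 1. Suppose (base case) every execution path of length at most k−1 satisfies φ at every step, and (induction step) for every (not necessarily initialized) sequence s₀, …, s_k with Trans(s_{j}, s_{j+1}, i_{j+1}, o_{j+1}) for 0 ≤ j ≤ k−1, if φ(s_j, i_{j+1}) holds for all 0 ≤ j ≤ k−2 then φ(s_{k−1}, i_k). Then the invariance □φ holds for all execution paths of any length. -/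
/-- Soundness of k-induction: if every execution path of length at most `k-1`
satisfies `φ` at every step (base case), and every non-initialized `Trans`-chain of
length `k` satisfying `φ` at its first `k-1` steps also satisfies `φ` at its
last step (induction step), then `□φ` holds for execution paths of any length. -/
theorem k_induction_sound {St I O : Type}
    (Init : St → Prop) (Trans : St → St → I → O → Prop) (φ : St → I → Prop)
    (k : ℕ) (hk : 1 ≤ k)
    (hbase : ∀ m ≤ k - 1, ∀ (s : ℕ → St) (i : ℕ → I) (o : ℕ → O),
      IsExec Init Trans m s i o → ∀ j < m, φ (s j) (i j))
    (hind : ∀ (s : ℕ → St) (i : ℕ → I) (o : ℕ → O),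
      (∀ j < k, Trans (s j) (s (j+1)) (i j) (o j)) →
      (∀ j < k - 1, φ (s j) (i j)) → φ (s (k-1)) (i (k-1))) :
    ∀ m (s : ℕ → St) (i : ℕ → I) (o : ℕ → O),
      IsExec Init Trans m s i o → ∀ j < m, φ (s j) (i j) := by
  rintro m s i o ⟨hinit, htrans⟩ j
  induction j using Nat.strong_induction_on with
  | _ j ih =>
    intro hjm
    by_cases hcase : j < k - 1
    · exact hbase (min m (k-1)) (min_le_right _ _) s i o
        ⟨hinit, fun n hn => htrans n (lt_of_lt_of_le hn (min_le_left _ _))⟩ j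
        (lt_min hjm hcase)
    · push_neg at hcase
      set d := j - (k - 1) with hd
      have hj : j = k - 1 + d := by omega
      have := hind (fun n => s (n + d)) (fun n => i (n + d)) (fun n => o (n + d))
        (fun n hn => by
          have := htrans (n + d) (by omega)
          simpa [Nat.add_right_comm] using this)
        (fun n hn => ih (n + d) (by omega) (by omega))
      simpa [← hj] using this
end

section
/- Validity of a switch invariance for a threshold above the fixed point: in S₁ with Init(s) ↔ s = 0 and Trans(s, s', i, o) ↔ o = max(−1, min(i, 1)) + 0.9·s ∧ s' = o, the invariance □(o ≤ 10) holds; moreover for any threshold th < 10 the invariance □(o ≤ th) fails (witnessed by the constant-input-1 execution, since o_j = 10(1 − 0.9^{j+1}) → 10). -/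
/-- Initial condition of the integrator model `S₁`. -/
def Init1 (s : ℝ) : Prop := s = 0

/-- Transition relation of the integrator model `S₁`. -/
noncomputable def Trans1 (s s' i o : ℝ) : Prop :=
  o = max (-1) (min i 1) + (9/10) * s ∧ s' = o

lemma state_le (k : ℕ) (s i o : ℕ → ℝ) (h : IsExec Init1 Trans1 k s i o) :
    ∀ j, j ≤ k → s j ≤ 10 := by
  obtain ⟨h0, hT⟩ := h
  intro j
  induction j with
  | zero => intro _; rw [h0]; norm_num
  | succ n ih =>
    intro hn
    obtain ⟨ho, hs⟩ := hT n (by omega)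
    have hsat : max (-1 : ℝ) (min (i n) 1) ≤ 1 := by
      apply max_le <;> simp [min_le_right]
    have := ih (by omega)
    rw [hs, ho]; nlinarith

/-- The invariance `□(o ≤ 10)` holds for `S₁`, while `□(o ≤ th)` fails for every
threshold `th < 10`. -/
theorem switch_threshold_dichotomy :
    (∀ (k : ℕ) (s i o : ℕ → ℝ), IsExec Init1 Trans1 k s i o →
      ∀ j < k, o j ≤ 10) ∧
    (∀ th : ℝ, th < 10 →
      ¬ ∀ (k : ℕ) (s i o : ℕ → ℝ), IsExec Init1 Trans1 k s i o →
        ∀ j < k, o j ≤ th) := by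
  constructor
  · intro k s i o h j hj
    obtain ⟨ho, hs⟩ := h.2 j hj
    have hsat : max (-1 : ℝ) (min (i j) 1) ≤ 1 := by
      apply max_le <;> simp [min_le_right]
    have := state_le k s i o h j (by omega)
    rw [ho]; nlinarith
  · intro th hth hall
    set f : ℕ → ℝ := fun j => 10 - 10 * (9/10 : ℝ)^j with hf
    obtain ⟨n, hn⟩ : ∃ n : ℕ, 10 * (9/10 : ℝ)^n < 10 - th := by
      obtain ⟨n, hn⟩ := exists_pow_lt_of_lt_one
        (show (0:ℝ) < (10 - th)/10 by linarith) (show (9/10:ℝ) < 1 by norm_num)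
      exact ⟨n, by linarith⟩
    have hexec : IsExec Init1 Trans1 (n+1) f (fun _ => 1) (fun j => f (j+1)) := by
      constructor
      · simp [Init1, hf]
      · intro j _
        constructor
        · simp only [hf]
          have : max (-1 : ℝ) (min (1:ℝ) 1) = 1 := by norm_num
          rw [this]; ring
        · rfl
    have := hall (n+1) f (fun _ => 1) (fun j => f (j+1)) hexec n (by omega)
    simp only [hf] at this
    have hpow : (9/10 : ℝ)^(n+1) ≤ (9/10 : ℝ)^n :=
      pow_le_pow_of_le_one (by norm_num) (by norm_num) (by omega)
    nlinarith
end
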